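/- arXiv:0911.1564 — 6 statements merged into one kernel-verified Lean document; each statement's English description precedes it below -/
import Mathlib

section
/- For any vector x ∈ ℝⁿ with n ≥ 1, the ℓ₂-norm of x minus (1/√n) times the ℓ₁-norm of x is at most (√n/4) times the difference between the maximum and minimum absolute values of the coordinates of x; that is, ‖x‖₂ - ‖x‖₁/√n ≤ (√n/4)·(maxᵢ |xᵢ| - minᵢ |xᵢ|). -/
/-!
With m = minᵢ |xᵢ| and M = maxᵢ |xᵢ|, each |xᵢ| satisfies (|xᵢ| - m)(M - |xᵢ|) ≥ 0; summing gives
‖x‖₂² ≤ (M + m)‖x‖₁ - n m M, and completing the square shows that this is at most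
(‖x‖₁/√n + √n (M - m)/4)² as soon as m ≥ 0.
-/

open Finset

theorem Finset.sum_sq_le_of_forall_mem_Icc {ι : Type*} (s : Finset ι) {a : ι → ℝ} {m M : ℝ}
    (h : ∀ i ∈ s, a i ∈ Set.Icc m M) :
    ∑ i ∈ s, a i ^ 2 ≤ (M + m) * ∑ i ∈ s, a i - #s * (m * M) := by
  have hterm : ∀ i ∈ s, a i ^ 2 ≤ (M + m) * a i - m * M := fun i hi => by
    obtain ⟨hmi, hiM⟩ := h i hi
    nlinarith [mul_nonneg (sub_nonneg.mpr hmi) (sub_nonneg.mpr hiM)]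
  calc ∑ i ∈ s, a i ^ 2 ≤ ∑ i ∈ s, ((M + m) * a i - m * M) := sum_le_sum hterm
    _ = (M + m) * ∑ i ∈ s, a i - #s * (m * M) := by
      rw [sum_sub_distrib, ← mul_sum, sum_const, nsmul_eq_mul]

theorem Real.sqrt_sub_div_le_of_le_mul_sub {q S s m M : ℝ} (hs : 0 < s) (hm : 0 ≤ m)
    (hmM : m ≤ M) (hS : 0 ≤ S) (hq : q ≤ (M + m) * S - s ^ 2 * (m * M)) :
    √q - S / s ≤ s / 4 * (M - m) := by
  set T := S / s
  have hST : S = T * s := (div_mul_cancel₀ S hs.ne').symm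
  -- (T + s(M - m)/4)² - ((M + m)Ts - s²mM) = (T - s(M + 3m)/4)² + s²m(M - m)/2
  have hsq : q ≤ (T + s / 4 * (M - m)) ^ 2 := by
    rw [hST] at hq
    nlinarith [sq_nonneg (T - s * (M + 3 * m) / 4),
      mul_nonneg (mul_nonneg (sq_nonneg s) hm) (sub_nonneg.mpr hmM)]
  have hrhs : 0 ≤ T + s / 4 * (M - m) := by
    have : 0 ≤ T := div_nonneg hS hs.le
    have : 0 ≤ s / 4 * (M - m) := mul_nonneg (by positivity) (sub_nonneg.mpr hmM)
    linarith
  linarith [Real.sqrt_le_iff.mpr ⟨hrhs, hsq⟩]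

theorem sqrt_sum_sq_sub_sum_div_sqrt_card_le {ι : Type*} [Fintype ι] [Nonempty ι] {a : ι → ℝ}
    {m M : ℝ} (hm : 0 ≤ m) (h : ∀ i, a i ∈ Set.Icc m M) :
    √(∑ i, a i ^ 2) - (∑ i, a i) / √(Fintype.card ι) ≤ √(Fintype.card ι) / 4 * (M - m) := by
  obtain ⟨i₀⟩ := ‹Nonempty ι›
  have hcard : (0 : ℝ) < Fintype.card ι := by exact_mod_cast Fintype.card_pos
  apply Real.sqrt_sub_div_le_of_le_mul_sub (Real.sqrt_pos.mpr hcard) hm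
    ((h i₀).1.trans (h i₀).2) (sum_nonneg fun i _ => hm.trans (h i).1)
  rw [Real.sq_sqrt hcard.le, ← card_univ]
  exact sum_sq_le_of_forall_mem_Icc univ fun i _ => h i

theorem l1_l2_norm_inequality (n : ℕ) (hn : 1 ≤ n) (x : Fin n → ℝ) :
    Real.sqrt (∑ i, (x i)^2) - (∑ i, |x i|) / Real.sqrt n ≤
      Real.sqrt n / 4 *
        ((Finset.univ.sup' (Finset.univ_nonempty_iff.mpr ⟨⟨0, hn⟩⟩) fun i => |x i|) -
         (Finset.univ.inf' (Finset.univ_nonempty_iff.mpr ⟨⟨0, hn⟩⟩) fun i => |x i|)) := by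
  have : Nonempty (Fin n) := ⟨⟨0, hn⟩⟩
  have hbounds : ∀ i, |x i| ∈ Set.Icc (univ.inf' univ_nonempty fun i => |x i|)
      (univ.sup' univ_nonempty fun i => |x i|) :=
    fun i => ⟨inf'_le (fun i => |x i|) (mem_univ i), le_sup' (fun i => |x i|) (mem_univ i)⟩
  have hinf : 0 ≤ univ.inf' univ_nonempty fun i => |x i| :=
    le_inf' _ _ fun i _ => abs_nonneg (x i)
  simpa only [sq_abs, Fintype.card_fin] using sqrt_sum_sq_sub_sum_div_sqrt_card_le hinf hbounds
end

section
/- For any vector x ∈ ℝⁿ with n ≥ 1, ‖x‖₂ ≤ ‖x‖₁/√n + (√n/4)·‖x‖_∞. -/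
/-! Since `‖x‖₂² ≤ ‖x‖₁ ‖x‖_∞`, it suffices that `√(ab) ≤ a / t + (t / 4) b` for `a, b ≥ 0`,
`t > 0`, which is AM-GM `4uv ≤ (u + v)²` applied to `u = a / t`, `v = (t / 4) b`. -/

open Finset

theorem sum_sq_le_sum_abs_mul {ι : Type*} (s : Finset ι) (x : ι → ℝ) {M : ℝ}
    (hM : ∀ i ∈ s, |x i| ≤ M) : ∑ i ∈ s, x i ^ 2 ≤ (∑ i ∈ s, |x i|) * M := by
  rw [sum_mul]
  refine sum_le_sum fun i hi => ?_
  rw [← sq_abs, sq]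
  exact mul_le_mul_of_nonneg_left (hM i hi) (abs_nonneg _)

theorem sqrt_mul_le_div_add_mul {a b t : ℝ} (ha : 0 ≤ a) (hb : 0 ≤ b) (ht : 0 < t) :
    √(a * b) ≤ a / t + t / 4 * b := by
  rw [Real.sqrt_le_iff]
  refine ⟨by positivity, ?_⟩
  calc a * b = 4 * (a / t) * (t / 4 * b) := by field_simp
    _ ≤ (a / t + t / 4 * b) ^ 2 := four_mul_le_sq_add _ _

theorem l2_le_l1_add_linf (n : ℕ) (hn : 1 ≤ n) (x : Fin n → ℝ) :
    Real.sqrt (∑ i, (x i)^2) ≤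
      (∑ i, |x i|) / Real.sqrt n +
        Real.sqrt n / 4 *
          (Finset.univ.sup' (Finset.univ_nonempty_iff.mpr ⟨⟨0, hn⟩⟩) fun i => |x i|) := by
  set M := univ.sup' (univ_nonempty_iff.mpr ⟨⟨0, hn⟩⟩) fun i => |x i|
  have hM : ∀ i ∈ univ, |x i| ≤ M := fun i hi => le_sup' (fun j => |x j|) hi
  have hM₀ : 0 ≤ M := (abs_nonneg _).trans (hM ⟨0, hn⟩ (mem_univ _))
  calc √(∑ i, x i ^ 2) ≤ √((∑ i, |x i|) * M) :=
        Real.sqrt_le_sqrt (sum_sq_le_sum_abs_mul univ x hM)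
    _ ≤ _ := sqrt_mul_le_div_add_mul (sum_nonneg fun i _ => abs_nonneg _) hM₀
        (Real.sqrt_pos.mpr (by exact_mod_cast hn))
end

section
/- Let x₁ ≥ xₙ ≥ 0 be fixed real numbers. Define g(κ) = √(κ(x₁² - xₙ²) + n·xₙ²) - (κ/√n)(x₁ - xₙ) - √n·xₙ for κ ∈ (0, n). Then g attains its maximum over (0,n) at κ* = n·((x₁+xₙ)²/4 - xₙ²)/(x₁² - xₙ²) (assuming x₁ > xₙ), and g(κ) ≤ √n(x₁ - xₙ)·(1/2 - (x₁ + 3xₙ)/(4(x₁ + xₙ))) for all κ ∈ (0,n). -/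
/-!
The map `κ ↦ √(κ (x₁² - xₙ²) + n xₙ²)` is concave, and its tangent line at the point `κ*` where
the radicand equals `c² = n ((x₁ + xₙ)/2)²` has slope `(x₁² - xₙ²)/(2c) = (x₁ - xₙ)/√n`, exactly
the slope of the linear part of `g`. So `g` lies below the constant `g κ*`, by the AM-GM
inequality `√t ≤ (t + c²)/(2c)`.
-/

theorem Real.sqrt_le_add_sq_div_two_mul {t c : ℝ} (ht : 0 ≤ t) (hc : 0 < c) :
    √t ≤ (t + c ^ 2) / (2 * c) := by
  rw [le_div_iff₀ (by positivity)]
  nlinarith [sq_nonneg (√t - c), Real.sq_sqrt ht]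

theorem Real.sqrt_mul_add_sub_le {a b c κ : ℝ} (hc : 0 < c) (hκ : 0 ≤ κ * a + b) :
    √(κ * a + b) - κ * a / (2 * c) ≤ (b + c ^ 2) / (2 * c) := by
  have hsplit : (κ * a + b + c ^ 2) / (2 * c) = κ * a / (2 * c) + (b + c ^ 2) / (2 * c) := by
    ring
  linarith [Real.sqrt_le_add_sq_div_two_mul hκ hc]

theorem Real.sqrt_mul_add_sub_eq {a b c κ : ℝ} (hc : 0 < c) (hκ : κ * a + b = c ^ 2) :
    √(κ * a + b) - κ * a / (2 * c) = (b + c ^ 2) / (2 * c) := by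
  rw [hκ, Real.sqrt_sq hc.le, show κ * a = c ^ 2 - b by linarith]
  field_simp
  ring

theorem g_max (n : ℕ) (hn : 0 < n) (x1 xn : ℝ) (hx : xn < x1) (hxn : 0 ≤ xn)
    (g : ℝ → ℝ)
    (hg : ∀ κ : ℝ, g κ =
      Real.sqrt (κ * (x1^2 - xn^2) + n * xn^2) - κ / Real.sqrt n * (x1 - xn)
        - Real.sqrt n * xn) :
    (∀ κ ∈ Set.Ioo (0:ℝ) n,
        g κ ≤ g (n * (((x1 + xn) / 2)^2 - xn^2) / (x1^2 - xn^2))) ∧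
    (∀ κ ∈ Set.Ioo (0:ℝ) n,
        g κ ≤ Real.sqrt n * (x1 - xn) * (1/2 - (x1 + 3*xn) / (4*(x1 + xn)))) := by
  have hs : 0 < √(n : ℝ) := Real.sqrt_pos.mpr (by exact_mod_cast hn)
  have hs_sq : √(n : ℝ) ^ 2 = n := Real.sq_sqrt (Nat.cast_nonneg n)
  have hsum : 0 < x1 + xn := by linarith
  have hA : 0 < x1 ^ 2 - xn ^ 2 := by nlinarith
  set c := √(n : ℝ) * (x1 + xn) / 2 with hc_def
  have hc : 0 < c := by positivity
  set κmax := n * (((x1 + xn) / 2) ^ 2 - xn ^ 2) / (x1 ^ 2 - xn ^ 2) with hκmax_def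
  have hslope (κ : ℝ) : κ / √(n : ℝ) * (x1 - xn) = κ * (x1 ^ 2 - xn ^ 2) / (2 * c) := by
    field_simp
    ring
  have hpeak : κmax * (x1 ^ 2 - xn ^ 2) + n * xn ^ 2 = c ^ 2 := by
    rw [hκmax_def, hc_def]
    field_simp
    rw [hs_sq]
    ring
  have hg_max : g κmax = (n * xn ^ 2 + c ^ 2) / (2 * c) - √(n : ℝ) * xn := by
    rw [hg, hslope, Real.sqrt_mul_add_sub_eq hc hpeak]
  have hle : ∀ κ ∈ Set.Ioo (0 : ℝ) n, g κ ≤ g κmax := by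
    rintro κ ⟨hκ, -⟩
    have hrad : 0 ≤ κ * (x1 ^ 2 - xn ^ 2) + n * xn ^ 2 :=
      add_nonneg (mul_nonneg hκ.le hA.le) (by positivity)
    rw [hg, hslope, hg_max]
    linarith [Real.sqrt_mul_add_sub_le hc hrad]
  refine ⟨hle, fun κ hκ => (hle κ hκ).trans_eq ?_⟩
  rw [hg_max, hc_def]
  field_simp
  rw [hs_sq]
  ring
end

section
/- For any n×p matrix Φ and positive integers k, k' with k + k' ≤ p, θ_{k,k'}(Φ) ≤ δ_{k+k'}(Φ). -/
noncomputable def l2norm {p : ℕ} (c : Fin p → ℝ) : ℝ := Real.sqrt (∑ i, (c i)^2)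

def IsSparse {p : ℕ} (k : ℕ) (c : Fin p → ℝ) : Prop :=
  (Finset.univ.filter (fun i => c i ≠ 0)).card ≤ k

/-- The restricted isometry constant `δ_k(Φ)`. -/
noncomputable def ripConst {n p : ℕ} (Φ : Matrix (Fin n) (Fin p) ℝ) (k : ℕ) : ℝ :=
  sInf {δ : ℝ | 0 ≤ δ ∧ ∀ c : Fin p → ℝ, IsSparse k c →
    (1 - δ) * ∑ i, (c i)^2 ≤ (∑ i, (Φ.mulVec c i)^2) ∧
    (∑ i, (Φ.mulVec c i)^2) ≤ (1 + δ) * ∑ i, (c i)^2}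

/-- The restricted orthogonality constant `θ_{k,k'}(Φ)`. -/
noncomputable def roConst {n p : ℕ} (Φ : Matrix (Fin n) (Fin p) ℝ) (k k' : ℕ) : ℝ :=
  sInf {θ : ℝ | 0 ≤ θ ∧ ∀ c c' : Fin p → ℝ, IsSparse k c → IsSparse k' c' →
    (∀ i, c i = 0 ∨ c' i = 0) →
    |∑ i, (Φ.mulVec c i) * (Φ.mulVec c' i)| ≤ θ * l2norm c * l2norm c'}

/-! By polarization `4⟨Φx, Φy⟩ = ‖Φ(x+y)‖² - ‖Φ(x-y)‖²`. For orthogonal `x, y` with `x ± y`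
`(k+k')`-sparse, both terms lie within `δ(‖x‖² + ‖y‖²)` of `‖x‖² + ‖y‖²`, so
`|⟨Φx, Φy⟩| ≤ δ(‖x‖² + ‖y‖²)/2`. Applied to `‖c'‖ c` and `‖c‖ c'`, which are disjointly supported
and of equal length, this gives `|⟨Φc, Φc'⟩| ≤ δ ‖c‖ ‖c'‖`: every RIP constant is an RO constant.
The infimum defining `δ_{k+k'}` is over a nonempty set, since `1 + ‖Φ‖_F²` is an RIP constant. -/

open Finset

section SumSq

variable {ι : Type*} [Fintype ι]

lemma sum_add_sq (u v : ι → ℝ) :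
    ∑ i, (u + v) i ^ 2 = ∑ i, u i ^ 2 + 2 * ∑ i, u i * v i + ∑ i, v i ^ 2 := by
  simp only [Pi.add_apply, add_sq, sum_add_distrib, mul_sum, mul_assoc]

lemma sum_sub_sq (u v : ι → ℝ) :
    ∑ i, (u - v) i ^ 2 = ∑ i, u i ^ 2 - 2 * ∑ i, u i * v i + ∑ i, v i ^ 2 := by
  simp only [Pi.sub_apply, sub_sq, sum_add_distrib, sum_sub_distrib, mul_sum, mul_assoc]

lemma sum_smul_sq (a : ℝ) (u : ι → ℝ) : ∑ i, (a • u) i ^ 2 = a ^ 2 * ∑ i, u i ^ 2 := by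
  simp only [Pi.smul_apply, smul_eq_mul, mul_pow, mul_sum]

lemma sum_mul_eq_zero_of_disjoint {u v : ι → ℝ} (h : ∀ i, u i = 0 ∨ v i = 0) :
    ∑ i, u i * v i = 0 :=
  sum_eq_zero fun i _ => (h i).elim (fun hu => by simp [hu]) (fun hv => by simp [hv])

end SumSq

lemma l2norm_sq {p : ℕ} (c : Fin p → ℝ) : l2norm c ^ 2 = ∑ i, c i ^ 2 :=
  Real.sq_sqrt (sum_nonneg fun i _ => sq_nonneg (c i))

lemma l2norm_pos {p : ℕ} {c : Fin p → ℝ} (hc : c ≠ 0) : 0 < l2norm c := by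
  obtain ⟨i, hi⟩ := Function.ne_iff.1 hc
  exact Real.sqrt_pos.2 <|
    sum_pos' (fun j _ => sq_nonneg (c j)) ⟨i, mem_univ i, pow_two_pos_of_ne_zero hi⟩

namespace IsSparse

variable {p k k' : ℕ} {c c' z : Fin p → ℝ}

lemma of_support_subset (hc : IsSparse k c) (h : ∀ i, z i ≠ 0 → c i ≠ 0) : IsSparse k z :=
  (card_le_card (monotone_filter_right _ fun i _ => h i)).trans hc

lemma of_support_subset_union (hc : IsSparse k c) (hc' : IsSparse k' c')
    (h : ∀ i, z i ≠ 0 → c i ≠ 0 ∨ c' i ≠ 0) : IsSparse (k + k') z := by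
  refine (card_le_card fun i hi => ?_).trans ((card_union_le _ _).trans (add_le_add hc hc'))
  simpa only [mem_union, mem_filter, mem_univ, true_and] using h i (mem_filter.1 hi).2

lemma smul (hc : IsSparse k c) (a : ℝ) : IsSparse k (a • c) :=
  hc.of_support_subset fun _ hi => right_ne_zero_of_mul hi

lemma add (hc : IsSparse k c) (hc' : IsSparse k' c') : IsSparse (k + k') (c + c') :=
  hc.of_support_subset_union hc' fun i hi => by
    contrapose! hi
    simp [hi.1, hi.2]

lemma sub (hc : IsSparse k c) (hc' : IsSparse k' c') : IsSparse (k + k') (c - c') :=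
  hc.of_support_subset_union hc' fun i hi => by
    contrapose! hi
    simp [hi.1, hi.2]

end IsSparse

section Constants

variable {n p : ℕ} (Φ : Matrix (Fin n) (Fin p) ℝ)

def HasRIP (K : ℕ) (δ : ℝ) : Prop :=
  ∀ c : Fin p → ℝ, IsSparse K c →
    (1 - δ) * ∑ i, (c i)^2 ≤ (∑ i, (Φ.mulVec c i)^2) ∧
    (∑ i, (Φ.mulVec c i)^2) ≤ (1 + δ) * ∑ i, (c i)^2

def HasRO (k k' : ℕ) (θ : ℝ) : Prop :=
  ∀ c c' : Fin p → ℝ, IsSparse k c → IsSparse k' c' →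
    (∀ i, c i = 0 ∨ c' i = 0) →
    |∑ i, (Φ.mulVec c i) * (Φ.mulVec c' i)| ≤ θ * l2norm c * l2norm c'

lemma sum_mulVec_sq_le (c : Fin p → ℝ) :
    ∑ i, Φ.mulVec c i ^ 2 ≤ (∑ i, ∑ j, Φ i j ^ 2) * ∑ j, c j ^ 2 := by
  rw [sum_mul]
  exact sum_le_sum fun i _ => sum_mul_sq_le_sq_mul_sq univ (Φ i) c

lemma hasRIP_one_add_sum_sq (K : ℕ) : HasRIP Φ K (1 + ∑ i, ∑ j, Φ i j ^ 2) := by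
  intro c _
  have hΦ : 0 ≤ ∑ i, ∑ j, Φ i j ^ 2 := by positivity
  have hc : 0 ≤ ∑ j, c j ^ 2 := by positivity
  constructor
  · have : 0 ≤ ∑ i, Φ.mulVec c i ^ 2 := by positivity
    nlinarith
  · nlinarith [sum_mulVec_sq_le Φ c]

variable {Φ}

lemma HasRIP.abs_sum_mulVec_mul_le {K : ℕ} {δ : ℝ} (h : HasRIP Φ K δ)
    {x y : Fin p → ℝ} (hxy : ∑ i, x i * y i = 0)
    (hadd : IsSparse K (x + y)) (hsub : IsSparse K (x - y)) :
    |∑ i, Φ.mulVec x i * Φ.mulVec y i| ≤ δ * (∑ i, x i ^ 2 + ∑ i, y i ^ 2) / 2 := by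
  obtain ⟨hadd_lo, hadd_hi⟩ := h _ hadd
  obtain ⟨hsub_lo, hsub_hi⟩ := h _ hsub
  rw [Matrix.mulVec_add, sum_add_sq, sum_add_sq, hxy] at hadd_lo hadd_hi
  rw [Matrix.mulVec_sub, sum_sub_sq, sum_sub_sq, hxy] at hsub_lo hsub_hi
  rw [abs_le]
  constructor <;> linarith

lemma HasRIP.hasRO {k k' : ℕ} {δ : ℝ} (h : HasRIP Φ (k + k') δ) : HasRO Φ k k' δ := by
  intro c c' hc hc' hdisj
  rcases eq_or_ne c 0 with rfl | hc0
  · simp [l2norm]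
  rcases eq_or_ne c' 0 with rfl | hc'0
  · simp [l2norm]
  set a := l2norm c
  set b := l2norm c'
  have hab : 0 < a * b := mul_pos (l2norm_pos hc0) (l2norm_pos hc'0)
  have hxy : ∑ i, (b • c) i * (a • c') i = 0 :=
    sum_mul_eq_zero_of_disjoint fun i =>
      (hdisj i).imp (fun h => by simp [h]) (fun h => by simp [h])
  have hpol := h.abs_sum_mulVec_mul_le hxy ((hc.smul b).add (hc'.smul a))
    ((hc.smul b).sub (hc'.smul a))
  have hscale : ∑ i, Φ.mulVec (b • c) i * Φ.mulVec (a • c') i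
      = a * b * ∑ i, Φ.mulVec c i * Φ.mulVec c' i := by
    simp only [Matrix.mulVec_smul, Pi.smul_apply, smul_eq_mul, mul_sum]
    exact sum_congr rfl fun i _ => by ring
  rw [hscale, sum_smul_sq, sum_smul_sq, ← l2norm_sq, ← l2norm_sq, abs_mul, abs_of_pos hab]
    at hpol
  refine le_of_mul_le_mul_left ?_ hab
  nlinarith

end Constants

theorem roConst_le_ripConst_general (n p k k' : ℕ) (Φ : Matrix (Fin n) (Fin p) ℝ) :
    roConst Φ k k' ≤ ripConst Φ (k + k') :=
  le_csInf ⟨_, by positivity, hasRIP_one_add_sum_sq Φ (k + k')⟩ fun _ ⟨hδ, hRIP⟩ =>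
    csInf_le ⟨0, fun _ hθ => hθ.1⟩ ⟨hδ, HasRIP.hasRO hRIP⟩

theorem roConst_le_ripConst (n p k k' : ℕ) (Φ : Matrix (Fin n) (Fin p) ℝ)
    (hk : 0 < k) (hk' : 0 < k') (hp : k + k' ≤ p) :
    roConst Φ k k' ≤ ripConst Φ (k + k') :=
  roConst_le_ripConst_general n p k k' Φ
end

section
/- For any n×p matrix Φ and positive integers k, k' with k + k' ≤ p, δ_{k+k'}(Φ) ≤ θ_{k,k'}(Φ) + (k·δ_k(Φ) + k'·δ_{k'}(Φ))/(k + k'). -/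
/-!
Split a `(k + k')`-sparse `c` into disjointly supported `k`- and `k'`-sparse parts `c₁`, `c₂`.
Expanding `‖Φc‖² = ‖Φc₁‖² + ‖Φc₂‖² + 2⟨Φc₁, Φc₂⟩` and using `2‖c₁‖‖c₂‖ ≤ ‖c‖²` gives
`|‖Φc‖² - ‖c‖²| ≤ δ_k ‖c₁‖² + δ_{k'} ‖c₂‖² + θ_{k,k'} ‖c‖²`. The split can be chosen so that the
part weighted by the larger of `δ_k`, `δ_{k'}` carries at most its proportional share `k / (k + k')`
or `k' / (k + k')` of `‖c‖²` (put the smallest entries there, by an exchange argument); then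
`δ_k ‖c₁‖² + δ_{k'} ‖c₂‖²` is at most the weighted average `(k δ_k + k' δ_{k'}) / (k + k')`
times `‖c‖²`.
-/

open Finset

lemma le_sInf_mul {A : Set ℝ} (hA : A.Nonempty) {a s : ℝ} (hs : 0 ≤ s)
    (h : ∀ δ ∈ A, a ≤ δ * s) : a ≤ sInf A * s := by
  rw [mul_comm, ← smul_eq_mul, ← Real.sInf_smul_of_nonneg hs]
  refine le_csInf hA.smul_set ?_
  rintro _ ⟨δ, hδ, rfl⟩
  simpa [mul_comm] using h δ hδ

section Averaging

variable {ι : Type*} {f : ι → ℝ}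

lemma card_mul_sum_le_card_mul_sum {S U : Finset ι} (h : ∀ x ∈ S, ∀ y ∈ U, f x ≤ f y) :
    (#U : ℝ) * ∑ x ∈ S, f x ≤ #S * ∑ y ∈ U, f y :=
  calc (#U : ℝ) * ∑ x ∈ S, f x = ∑ x ∈ S, ∑ _y ∈ U, f x := by simp [mul_sum]
    _ ≤ ∑ _x ∈ S, ∑ y ∈ U, f y := sum_le_sum fun x hx => sum_le_sum fun y hy => h x hx y hy
    _ = #S * ∑ y ∈ U, f y := by simp

lemma le_of_sum_isMin_powersetCard [DecidableEq ι] {S T : Finset ι} (hST : S ⊆ T)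
    (hmin : ∀ S' ∈ T.powersetCard #S, ∑ i ∈ S, f i ≤ ∑ i ∈ S', f i)
    {x y : ι} (hx : x ∈ S) (hy : y ∈ T \ S) : f x ≤ f y := by
  obtain ⟨hyT, hyS⟩ := mem_sdiff.mp hy
  have hy' : y ∉ S.erase x := fun h => hyS (mem_of_mem_erase h)
  have hswap : insert y (S.erase x) ∈ T.powersetCard #S := by
    refine mem_powersetCard.mpr ⟨insert_subset hyT ((erase_subset x S).trans hST), ?_⟩
    rw [card_insert_of_notMem hy', card_erase_add_one hx]
  have := hmin _ hswap
  rw [sum_insert hy', ← add_sum_erase S f hx] at this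
  linarith

lemma exists_subset_mul_sum_le [DecidableEq ι] (hf : ∀ i, 0 ≤ f i) {T : Finset ι} {k k' : ℕ}
    (hT : #T ≤ k + k') :
    ∃ S ⊆ T, #S ≤ k ∧ #(T \ S) ≤ k' ∧ (k' : ℝ) * ∑ i ∈ S, f i ≤ k * ∑ i ∈ T \ S, f i := by
  obtain ⟨S, hS, hmin⟩ := exists_min_image (T.powersetCard (#T - k')) (fun S => ∑ i ∈ S, f i)
    (powersetCard_nonempty.mpr (Nat.sub_le _ _))
  obtain ⟨hST, hcard⟩ := mem_powersetCard.mp hS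
  refine ⟨S, hST, by omega, by rw [card_sdiff_of_subset hST]; omega, ?_⟩
  rcases Nat.eq_zero_or_pos #S with hS0 | hSpos
  · rw [card_eq_zero.mp hS0, sum_empty, mul_zero]
    exact mul_nonneg (Nat.cast_nonneg k) (sum_nonneg fun i _ => hf i)
  · have hexch := card_mul_sum_le_card_mul_sum fun x hx y hy =>
      le_of_sum_isMin_powersetCard hST (hcard ▸ hmin) hx hy
    have hk : (#S : ℝ) ≤ k := by exact_mod_cast (show #S ≤ k by omega)
    rw [card_sdiff_of_subset hST, show #T - #S = k' by omega] at hexch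
    have hrest : 0 ≤ ∑ i ∈ T \ S, f i := sum_nonneg fun i _ => hf i
    nlinarith

end Averaging

lemma abs_sub_le_mul_iff {s t δ : ℝ} :
    |t - s| ≤ δ * s ↔ (1 - δ) * s ≤ t ∧ t ≤ (1 + δ) * s := by
  rw [abs_sub_le_iff]
  constructor <;> rintro ⟨h₁, h₂⟩ <;> constructor <;> linarith

section Constants

variable {n p : ℕ} (Φ : Matrix (Fin n) (Fin p) ℝ)

lemma sum_sq_mulVec_le (c : Fin p → ℝ) :
    ∑ i, (Φ.mulVec c i)^2 ≤ (∑ i, ∑ j, (Φ i j)^2) * ∑ j, (c j)^2 := by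
  rw [sum_mul]
  refine sum_le_sum fun i _ => ?_
  simpa [Matrix.mulVec, dotProduct] using sum_mul_sq_le_sq_mul_sq univ (Φ i) c

lemma ripConst_set_nonempty (k : ℕ) :
    {δ : ℝ | 0 ≤ δ ∧ ∀ c : Fin p → ℝ, IsSparse k c →
      (1 - δ) * ∑ i, (c i)^2 ≤ (∑ i, (Φ.mulVec c i)^2) ∧
      (∑ i, (Φ.mulVec c i)^2) ≤ (1 + δ) * ∑ i, (c i)^2}.Nonempty := by
  refine ⟨1 + ∑ i, ∑ j, (Φ i j)^2, by positivity, fun c _ => abs_sub_le_mul_iff.mp ?_⟩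
  have hΦc := sum_sq_mulVec_le Φ c
  have : 0 ≤ ∑ i, (Φ.mulVec c i)^2 := by positivity
  have : 0 ≤ ∑ j, (c j)^2 := by positivity
  rw [abs_sub_le_iff]
  constructor <;> nlinarith

lemma roConst_set_nonempty (k k' : ℕ) :
    {θ : ℝ | 0 ≤ θ ∧ ∀ c c' : Fin p → ℝ, IsSparse k c → IsSparse k' c' →
      (∀ i, c i = 0 ∨ c' i = 0) →
      |∑ i, (Φ.mulVec c i) * (Φ.mulVec c' i)| ≤ θ * l2norm c * l2norm c'}.Nonempty := by
  set M := ∑ i, ∑ j, (Φ i j)^2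
  have hM : 0 ≤ M := by positivity
  refine ⟨M, hM, fun c c' _ _ _ => ?_⟩
  have hnorm : 0 ≤ M * l2norm c * l2norm c' := by unfold l2norm; positivity
  rw [← Real.sqrt_sq hnorm]
  refine Real.abs_le_sqrt ?_
  have ha : 0 ≤ ∑ j, (c j)^2 := by positivity
  have hb : 0 ≤ ∑ j, (c' j)^2 := by positivity
  calc (∑ i, Φ.mulVec c i * Φ.mulVec c' i)^2
      ≤ (∑ i, (Φ.mulVec c i)^2) * ∑ i, (Φ.mulVec c' i)^2 := sum_mul_sq_le_sq_mul_sq _ _ _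
    _ ≤ (M * ∑ j, (c j)^2) * (M * ∑ j, (c' j)^2) :=
        mul_le_mul (sum_sq_mulVec_le Φ c) (sum_sq_mulVec_le Φ c') (by positivity) (by positivity)
    _ = (M * l2norm c * l2norm c')^2 := by
        rw [mul_pow, mul_pow, l2norm, l2norm, Real.sq_sqrt ha, Real.sq_sqrt hb]; ring

lemma ripConst_nonneg (k : ℕ) : 0 ≤ ripConst Φ k :=
  Real.sInf_nonneg fun _ hδ => hδ.1

lemma roConst_nonneg (k k' : ℕ) : 0 ≤ roConst Φ k k' :=
  Real.sInf_nonneg fun _ hθ => hθ.1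

lemma abs_sum_sq_mulVec_sub_le_ripConst {k : ℕ} {c : Fin p → ℝ} (hc : IsSparse k c) :
    |∑ i, (Φ.mulVec c i)^2 - ∑ i, (c i)^2| ≤ ripConst Φ k * ∑ i, (c i)^2 :=
  le_sInf_mul (ripConst_set_nonempty Φ k) (by positivity) fun _ hδ =>
    abs_sub_le_mul_iff.mpr (hδ.2 c hc)

lemma abs_sum_mulVec_mul_le_roConst {k k' : ℕ} {c c' : Fin p → ℝ} (hc : IsSparse k c)
    (hc' : IsSparse k' c') (hd : ∀ i, c i = 0 ∨ c' i = 0) :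
    |∑ i, (Φ.mulVec c i) * (Φ.mulVec c' i)| ≤ roConst Φ k k' * l2norm c * l2norm c' := by
  rw [mul_assoc]
  refine le_sInf_mul (roConst_set_nonempty Φ k k') (by unfold l2norm; positivity) fun θ hθ => ?_
  rw [← mul_assoc]
  exact hθ.2 c c' hc hc' hd

end Constants

section Decomposition

variable {p : ℕ}

lemma sum_sq_add_of_disjoint {c₁ c₂ : Fin p → ℝ} (hd : ∀ i, c₁ i = 0 ∨ c₂ i = 0) :
    ∑ i, ((c₁ + c₂) i)^2 = ∑ i, (c₁ i)^2 + ∑ i, (c₂ i)^2 := by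
  rw [← sum_add_distrib]
  refine sum_congr rfl fun i _ => ?_
  rcases hd i with h | h <;> simp [h]

lemma sum_sq_mulVec_add {n : ℕ} (Φ : Matrix (Fin n) (Fin p) ℝ) (c₁ c₂ : Fin p → ℝ) :
    ∑ i, (Φ.mulVec (c₁ + c₂) i)^2 = ∑ i, (Φ.mulVec c₁ i)^2 + ∑ i, (Φ.mulVec c₂ i)^2 +
      2 * ∑ i, Φ.mulVec c₁ i * Φ.mulVec c₂ i := by
  simp only [Matrix.mulVec_add, Pi.add_apply, add_sq, sum_add_distrib, mul_sum]
  ring_nf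

lemma isSparse_piecewise {k : ℕ} {S : Finset (Fin p)} (hS : #S ≤ k) (c : Fin p → ℝ) :
    IsSparse k (S.piecewise c 0) := by
  refine (card_le_card fun i hi => ?_).trans hS
  by_contra hiS
  exact (mem_filter.mp hi).2 (piecewise_eq_of_notMem _ _ _ hiS)

lemma sum_sq_piecewise (S : Finset (Fin p)) (c : Fin p → ℝ) :
    ∑ i, (S.piecewise c 0 i)^2 = ∑ i ∈ S, (c i)^2 := by
  simp [Finset.piecewise, sum_ite_mem]

lemma exists_sparse_split {k k' : ℕ} {c : Fin p → ℝ} (hc : IsSparse (k + k') c) :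
    ∃ c₁ c₂ : Fin p → ℝ, c₁ + c₂ = c ∧ IsSparse k c₁ ∧ IsSparse k' c₂ ∧
      (∀ i, c₁ i = 0 ∨ c₂ i = 0) ∧ (k' : ℝ) * ∑ i, (c₁ i)^2 ≤ k * ∑ i, (c₂ i)^2 := by
  set T := univ.filter fun i => c i ≠ 0
  obtain ⟨S, hST, hS, hTS, hsum⟩ := exists_subset_mul_sum_le (fun i => sq_nonneg (c i)) hc
  refine ⟨S.piecewise c 0, (T \ S).piecewise c 0, ?_, isSparse_piecewise hS c,
    isSparse_piecewise hTS c, fun i => ?_, ?_⟩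
  · funext i
    by_cases hiS : i ∈ S <;> by_cases hci : c i = 0 <;> simp [Finset.piecewise, T, hiS, hci]
  · by_cases hiS : i ∈ S
    · exact Or.inr (piecewise_eq_of_notMem _ _ _ fun h => (mem_sdiff.mp h).2 hiS)
    · exact Or.inl (piecewise_eq_of_notMem _ _ _ hiS)
  · rwa [sum_sq_piecewise, sum_sq_piecewise]

end Decomposition

lemma exists_sparse_split_weighted {p k k' : ℕ} {c : Fin p → ℝ} (hc : IsSparse (k + k') c)
    (d d' : ℝ) :
    ∃ c₁ c₂ : Fin p → ℝ, c₁ + c₂ = c ∧ IsSparse k c₁ ∧ IsSparse k' c₂ ∧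
      (∀ i, c₁ i = 0 ∨ c₂ i = 0) ∧
      (k + k' : ℝ) * (d * ∑ i, (c₁ i)^2 + d' * ∑ i, (c₂ i)^2) ≤
        (k * d + k' * d') * (∑ i, (c₁ i)^2 + ∑ i, (c₂ i)^2) := by
  -- the inequality says `(d - d') * (k' * ∑ c₁² - k * ∑ c₂²) ≤ 0`:
  -- the part with the larger weight must be the lighter one
  rcases le_total d' d with hdd | hdd
  · obtain ⟨c₁, c₂, hc, h₁, h₂, hd, hw⟩ := exists_sparse_split hc
    exact ⟨c₁, c₂, hc, h₁, h₂, hd, by nlinarith⟩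
  · obtain ⟨c₂, c₁, hc, h₂, h₁, hd, hw⟩ :=
      exists_sparse_split (k := k') (k' := k) (add_comm k k' ▸ hc)
    exact ⟨c₁, c₂, add_comm c₁ c₂ ▸ hc, h₁, h₂, fun i => (hd i).symm, by nlinarith⟩

lemma abs_sum_sq_mulVec_add_sub_le {n p k k' : ℕ} (Φ : Matrix (Fin n) (Fin p) ℝ)
    {c₁ c₂ : Fin p → ℝ} (h₁ : IsSparse k c₁) (h₂ : IsSparse k' c₂)
    (hd : ∀ i, c₁ i = 0 ∨ c₂ i = 0) :
    |∑ i, (Φ.mulVec (c₁ + c₂) i)^2 - ∑ i, ((c₁ + c₂) i)^2| ≤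
      ripConst Φ k * ∑ i, (c₁ i)^2 + ripConst Φ k' * ∑ i, (c₂ i)^2 +
        roConst Φ k k' * (∑ i, (c₁ i)^2 + ∑ i, (c₂ i)^2) := by
  have hδ₁ := abs_le.mp (abs_sum_sq_mulVec_sub_le_ripConst Φ h₁)
  have hδ₂ := abs_le.mp (abs_sum_sq_mulVec_sub_le_ripConst Φ h₂)
  have hθ := abs_le.mp (abs_sum_mulVec_mul_le_roConst Φ h₁ h₂ hd)
  have hamgm : 2 * l2norm c₁ * l2norm c₂ ≤ ∑ i, (c₁ i)^2 + ∑ i, (c₂ i)^2 := by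
    have := two_mul_le_add_sq (l2norm c₁) (l2norm c₂)
    rwa [l2norm, l2norm, Real.sq_sqrt (by positivity), Real.sq_sqrt (by positivity)] at this
  have := mul_le_mul_of_nonneg_left hamgm (roConst_nonneg Φ k k')
  rw [sum_sq_mulVec_add, sum_sq_add_of_disjoint hd, abs_le]
  constructor <;> linarith

theorem ripConst_le_roConst_add_weighted_general (n p k k' : ℕ) (Φ : Matrix (Fin n) (Fin p) ℝ)
    (hk : 0 < k) :
    ripConst Φ (k + k') ≤
      roConst Φ k k' +
        ((k : ℝ) * ripConst Φ k + (k' : ℝ) * ripConst Φ k') / ((k : ℝ) + (k' : ℝ)) := by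
  have hkk : (0 : ℝ) < k + k' := by positivity
  have hδ := ripConst_nonneg Φ k
  have hδ' := ripConst_nonneg Φ k'
  have hθ := roConst_nonneg Φ k k'
  refine csInf_le ⟨0, fun _ hmem => hmem.1⟩ ⟨by positivity, fun c hc => abs_sub_le_mul_iff.mp ?_⟩
  obtain ⟨c₁, c₂, rfl, h₁, h₂, hd, hw⟩ :=
    exists_sparse_split_weighted hc (ripConst Φ k) (ripConst Φ k')
  have hweights : ripConst Φ k * ∑ i, (c₁ i)^2 + ripConst Φ k' * ∑ i, (c₂ i)^2 ≤
      (k * ripConst Φ k + k' * ripConst Φ k') / (k + k') * (∑ i, (c₁ i)^2 + ∑ i, (c₂ i)^2) := by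
    rw [div_mul_eq_mul_div, le_div_iff₀ hkk]
    linarith
  calc _ ≤ _ := abs_sum_sq_mulVec_add_sub_le Φ h₁ h₂ hd
    _ ≤ _ := by rw [sum_sq_add_of_disjoint hd]; linarith

theorem ripConst_le_roConst_add_weighted (n p k k' : ℕ) (Φ : Matrix (Fin n) (Fin p) ℝ)
    (hk : 0 < k) (hk' : 0 < k') (hp : k + k' ≤ p) :
    ripConst Φ (k + k') ≤
      roConst Φ k k' +
        ((k : ℝ) * ripConst Φ k + (k' : ℝ) * ripConst Φ k') / ((k : ℝ) + (k' : ℝ)) :=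
  ripConst_le_roConst_add_weighted_general n p k k' Φ hk
end

section
/- Sharpness of RIP conditions: for every positive integer k there exists a (2k-1)×2k real matrix Φ whose restricted isometry constant satisfies δ_k(Φ) = (k-1)/(2k-1), together with two nonzero k-sparse vectors β₁, β₂ ∈ ℝ^{2k} with disjoint supports such that Φβ₁ = Φβ₂. -/
/-! The columns of `Φ` are the vertices of a regular simplex scaled to unit length: its rows are
an orthonormal basis of `𝟙ᗮ` scaled by `√(n / (n - 1))`, so `‖Φ c‖² = (n ‖c‖² - (∑ c)²) / (n - 1)`.
For `k`-sparse `c`, Cauchy–Schwarz on the support gives `(∑ c)² ≤ k ‖c‖²`, with equality for the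
indicator of a `k`-set; this pins the lower isometry constant at `(k - 1) / (n - 1)`, and the upper
one is never larger. Since `Φ 𝟙 = 0`, for `n = 2k` the indicators of the first and of the last `k`
coordinates have the same image. -/

open Finset
open scoped RealInnerProductSpace Matrix

theorem OrthonormalBasis.sum_sq_inner_orthogonal_span_singleton {E ι : Type*}
    [NormedAddCommGroup E] [InnerProductSpace ℝ E] [Fintype ι] {v : E}
    (b : OrthonormalBasis ι ℝ (ℝ ∙ v)ᗮ) (x : E) :
    ∑ i, ⟪(b i : E), x⟫ ^ 2 = ‖x‖ ^ 2 - ⟪v, x⟫ ^ 2 / ‖v‖ ^ 2 := by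
  have hb : ∑ i, ⟪(b i : E), x⟫ ^ 2 = ‖(ℝ ∙ v)ᗮ.orthogonalProjectionOnto x‖ ^ 2 := by
    simp_rw [← b.sum_sq_inner_right, Submodule.inner_orthogonalProjectionOnto_eq_of_mem_left]
  have hv : ‖(ℝ ∙ v).starProjection x‖ ^ 2 = ⟪v, x⟫ ^ 2 / ‖v‖ ^ 2 := by
    rcases eq_or_ne v 0 with rfl | hv
    · simp
    · rw [Submodule.starProjection_singleton, norm_smul, mul_pow, Real.norm_eq_abs, sq_abs,
        RCLike.ofReal_real_eq_id, id, div_pow]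
      field_simp
  rw [hb, ← hv, (ℝ ∙ v).norm_sq_eq_add_norm_sq_starProjection x, add_sub_cancel_left]
  rfl

theorem Matrix.exists_sum_sq_mulVec_eq_sum_sq_sub {n : ℕ} (hn : 0 < n) :
    ∃ M : Matrix (Fin (n - 1)) (Fin n) ℝ, ∀ c : Fin n → ℝ,
      ∑ i, (M *ᵥ c) i ^ 2 = ∑ j, c j ^ 2 - (∑ j, c j) ^ 2 / n := by
  let one : EuclideanSpace ℝ (Fin n) := WithLp.toLp 2 1
  have hone : one ≠ 0 := fun h => by simpa [one] using congrFun (congrArg WithLp.ofLp h) ⟨0, hn⟩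
  have : Fact (Module.finrank ℝ (EuclideanSpace ℝ (Fin n)) = n - 1 + 1) := ⟨by simp; omega⟩
  let b := (stdOrthonormalBasis ℝ (ℝ ∙ one)ᗮ).reindex
    (finCongr (Submodule.finrank_orthogonal_span_singleton (n := n - 1) hone))
  refine ⟨Matrix.of fun i j => (b i : EuclideanSpace ℝ (Fin n)) j, fun c => ?_⟩
  convert b.sum_sq_inner_orthogonal_span_singleton (WithLp.toLp 2 c) using 3
  · simp [Matrix.mulVec, dotProduct, PiLp.inner_apply, mul_comm]
  · simp [EuclideanSpace.real_norm_sq_eq]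
  · simp [one, PiLp.inner_apply]
  · simp [one, EuclideanSpace.real_norm_sq_eq]

/-- The columns of `Φ` are unit vectors with pairwise inner products `-1 / (n - 1)`, i.e.
`Φᵀ Φ = (n • 1 - J) / (n - 1)`, expressed through the quadratic form of `Φᵀ Φ`. -/
def Matrix.IsSimplexFrame {m n : ℕ} (Φ : Matrix (Fin m) (Fin n) ℝ) : Prop :=
  ∀ c : Fin n → ℝ, ∑ i, (Φ *ᵥ c) i ^ 2 = (n * ∑ j, c j ^ 2 - (∑ j, c j) ^ 2) / (n - 1)

theorem Matrix.exists_isSimplexFrame {n : ℕ} (hn : 0 < n) :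
    ∃ Φ : Matrix (Fin (n - 1)) (Fin n) ℝ, Φ.IsSimplexFrame := by
  obtain ⟨M, hM⟩ := exists_sum_sq_mulVec_eq_sum_sq_sub hn
  refine ⟨√(n / (n - 1)) • M, fun c => ?_⟩
  have hn' : (1 : ℝ) ≤ n := by exact_mod_cast hn
  simp_rw [smul_mulVec, Pi.smul_apply, smul_eq_mul, mul_pow, ← mul_sum, hM]
  rw [Real.sq_sqrt (div_nonneg (by positivity) (by linarith))]
  rcases eq_or_ne ((n : ℝ) - 1) 0 with h | h
  · simp [h]
  · field_simp

theorem isSparse_of_support_subset {p k : ℕ} {c : Fin p → ℝ} {s : Finset (Fin p)}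
    (hs : #s ≤ k) (hc : Function.support c ⊆ (s : Set (Fin p))) : IsSparse k c :=
  (card_le_card fun _ hj => mem_coe.mp (hc (Function.mem_support.mpr (mem_filter.mp hj).2))).trans
    hs

theorem IsSparse.sq_sum_le {p k : ℕ} {c : Fin p → ℝ} (hc : IsSparse k c) :
    (∑ j, c j) ^ 2 ≤ k * ∑ j, c j ^ 2 := by
  set s := univ.filter fun j => c j ≠ 0
  have hsq : ∑ j ∈ s, c j ^ 2 = ∑ j, c j ^ 2 :=
    sum_filter_of_ne fun j _ h => by simpa using h
  calc (∑ j, c j) ^ 2 = (∑ j ∈ s, c j) ^ 2 := by rw [sum_filter_ne_zero]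
    _ ≤ #s * ∑ j ∈ s, c j ^ 2 := sq_sum_le_card_mul_sum_sq
    _ ≤ k * ∑ j, c j ^ 2 := by
      rw [hsq]
      exact mul_le_mul_of_nonneg_right (by exact_mod_cast hc) (by positivity)

theorem IsSparse.sq_sum_eq_sum_sq {p : ℕ} {c : Fin p → ℝ} (hc : IsSparse 1 c) :
    (∑ j, c j) ^ 2 = ∑ j, c j ^ 2 := by
  by_cases h : ∃ i, c i ≠ 0
  · obtain ⟨i, hi⟩ := h
    have hzero : ∀ j ≠ i, c j = 0 := fun j hji => by
      by_contra hj
      exact hji (card_le_one.mp hc j (by simpa using hj) i (by simpa using hi))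
    rw [sum_eq_single i fun j _ => hzero j, sum_eq_single i fun j _ hj => by simp [hzero j hj]]
      <;> simp
  · push Not at h
    simp [h]

namespace Matrix.IsSimplexFrame

variable {m n k : ℕ} {Φ : Matrix (Fin m) (Fin n) ℝ}

theorem mulVec_one (hΦ : Φ.IsSimplexFrame) : Φ *ᵥ 1 = 0 := by
  have h : ∑ i, (Φ *ᵥ 1) i ^ 2 = 0 := by simpa [sq] using hΦ 1
  exact funext fun i => by
    simpa using (sum_mul_self_eq_zero_iff _ _).mp (by simpa only [sq] using h) i (mem_univ i)

theorem sum_sq_mulVec_bounds (hΦ : Φ.IsSimplexFrame) (hn : 2 ≤ n) (hk : 1 ≤ k)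
    {c : Fin n → ℝ} (hc : IsSparse k c) :
    (1 - (k - 1) / (n - 1)) * ∑ j, c j ^ 2 ≤ ∑ i, (Φ *ᵥ c) i ^ 2 ∧
      ∑ i, (Φ *ᵥ c) i ^ 2 ≤ (1 + (k - 1) / (n - 1)) * ∑ j, c j ^ 2 := by
  have hn' : (0 : ℝ) < n - 1 := by
    have : (2 : ℝ) ≤ n := by exact_mod_cast hn
    linarith
  have hlow : 1 - ((k : ℝ) - 1) / (n - 1) = (n - k) / (n - 1) := by field_simp; ring
  have hup : 1 + ((k : ℝ) - 1) / (n - 1) = (n + k - 2) / (n - 1) := by field_simp; ring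
  have hcs := hc.sq_sum_le
  have hsmall : (2 - k) * ∑ j, c j ^ 2 ≤ (∑ j, c j) ^ 2 := by
    rcases eq_or_lt_of_le hk with rfl | hk2
    · rw [hc.sq_sum_eq_sum_sq]
      norm_num
    · have : (2 : ℝ) ≤ k := by exact_mod_cast hk2
      nlinarith [sq_nonneg (∑ j, c j), sum_nonneg fun j (_ : j ∈ univ) => sq_nonneg (c j)]
  rw [hΦ, hlow, hup, div_mul_eq_mul_div, div_mul_eq_mul_div,
    div_le_div_iff_of_pos_right hn', div_le_div_iff_of_pos_right hn']
  constructor <;> linarith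

theorem ripConst_eq (hΦ : Φ.IsSimplexFrame) (hn : 2 ≤ n) (hk : 1 ≤ k) (hkn : k ≤ n) :
    ripConst Φ k = (k - 1) / (n - 1) := by
  have hn' : (0 : ℝ) < n - 1 := by
    have : (2 : ℝ) ≤ n := by exact_mod_cast hn
    linarith
  have hk' : (1 : ℝ) ≤ k := by exact_mod_cast hk
  refine IsLeast.csInf_eq ⟨⟨div_nonneg (by linarith) hn'.le,
    fun c hc => hΦ.sum_sq_mulVec_bounds hn hk hc⟩, fun δ hδ => ?_⟩
  obtain ⟨s, -, hs⟩ := exists_subset_card_eq (s := (univ : Finset (Fin n))) (by simpa using hkn)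
  let c : Fin n → ℝ := fun j => if j ∈ s then 1 else 0
  have hsum : ∑ j, c j = k := by simp [c, hs]
  have hsq : ∑ j, c j ^ 2 = k := by simp [c, ite_pow, hs]
  have h := (hδ.2 c (isSparse_of_support_subset hs.le fun j hj => by simpa [c] using hj)).1
  rw [hΦ, hsum, hsq, le_div_iff₀ hn'] at h
  rw [div_le_iff₀ hn']
  nlinarith

end Matrix.IsSimplexFrame

theorem rip_sharpness (k : ℕ) (hk : 0 < k) :
    ∃ Φ : Matrix (Fin (2*k - 1)) (Fin (2*k)) ℝ,
      ripConst Φ k = ((k : ℝ) - 1) / (2*(k : ℝ) - 1) ∧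
      ∃ β₁ β₂ : Fin (2*k) → ℝ,
        β₁ ≠ 0 ∧ β₂ ≠ 0 ∧ IsSparse k β₁ ∧ IsSparse k β₂ ∧
        (∀ i, β₁ i = 0 ∨ β₂ i = 0) ∧
        Φ.mulVec β₁ = Φ.mulVec β₂ := by
  obtain ⟨Φ, hΦ⟩ := Matrix.exists_isSimplexFrame (n := 2 * k) (by omega)
  let s : Finset (Fin (2 * k)) := {j | (j : ℕ) < k}
  have hs : #s = k := by simp [s, Fin.card_filter_val_lt]; omega
  have hsc : #sᶜ = k := by rw [card_compl, hs]; simp; omega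
  let β : Fin (2 * k) → ℝ := fun j => if j ∈ s then 1 else 0
  refine ⟨Φ, ?_, β, β - 1, ?_, ?_, ?_, ?_, ?_, ?_⟩
  · simpa using hΦ.ripConst_eq (by omega) hk (by omega)
  · exact fun h => hk.ne' (by simpa [β, s] using congrFun h ⟨0, by omega⟩)
  · exact fun h => by
      simpa [β, s, show ¬2 * k - 1 < k by omega] using congrFun h ⟨2 * k - 1, by omega⟩
  · exact isSparse_of_support_subset hs.le fun j hj => by simpa [β] using hj
  · exact isSparse_of_support_subset hsc.le fun j hj =>
      mem_compl.mpr fun hjs => hj (by simp [β, hjs])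
  · intro j
    by_cases hj : j ∈ s <;> simp [β, hj]
  · rw [Matrix.mulVec_sub, hΦ.mulVec_one, sub_zero]
end
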